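/- For every integer m ≥ 2, the alternating sum over independent sets of Δ_1^m equals Σ_{S independent in Δ_1^m} (−1)^{|S|} = 1 + (−1)^m. (This reflects that Ind(Δ_1^m) is homotopy equivalent to Ind(Ŷ_2^m) ≃ S^1 ∨ S^{m−1}.) -/
import Mathlib


attribute [local instance] Classical.propDecidable

/-- The alternating sum `Σ_S (-1)^{|S|}` over all independent sets `S` of
vertices of `G` (including the empty set). -/
noncomputable def indepSum {V : Type} [Fintype V] (G : SimpleGraph V) : ℤ :=
  ∑ S ∈ Finset.univ.filter
      (fun S : Finset V => ∀ x ∈ S, ∀ y ∈ S, ¬ G.Adj x y),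
    (-1 : ℤ) ^ S.card

/-- Base relation for `Δ_n^m`: `Sum.inl 0 = a` and `Sum.inl 1 = b` are joined
by `m` internally disjoint paths with internal vertices `Sum.inr (Sum.inl (j, s))`
for `s : Fin (n+1)` (so each path has `n + 2` edges), and there are `n` extra
vertices `Sum.inr (Sum.inr t)` for `t : Fin n`, the vertex `t` (representing
`t + 1 ∈ {1, …, n}`) being adjacent to `(j, s)` for `s = t` and `s = t + 1`
(i.e. to the `(t+1)`-st and `(t+2)`-nd internal vertices of every path). -/
def deltaRel (m n : ℕ) :
    (Fin 2 ⊕ (Fin m × Fin (n + 1) ⊕ Fin n)) →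
    (Fin 2 ⊕ (Fin m × Fin (n + 1) ⊕ Fin n)) → Prop
  | Sum.inl i, Sum.inr (Sum.inl (_, s)) => (i = 0 ∧ (s : ℕ) = 0) ∨ (i = 1 ∧ (s : ℕ) = n)
  | Sum.inr (Sum.inl (j, s)), Sum.inr (Sum.inl (j', s')) => j = j' ∧ (s' : ℕ) = (s : ℕ) + 1
  | Sum.inr (Sum.inr t), Sum.inr (Sum.inl (_, s)) => (s : ℕ) = (t : ℕ) ∨ (s : ℕ) = (t : ℕ) + 1
  | _, _ => False

/-- The graph `Δ_n^m`. -/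
def deltaGraph (m n : ℕ) : SimpleGraph (Fin 2 ⊕ (Fin m × Fin (n + 1) ⊕ Fin n)) :=
  SimpleGraph.fromRel (deltaRel m n)

open Finset Sum

/-- the per-column condition -/
def colCond (A : Finset (Fin 2)) (T : Finset (Fin 1)) (g : Finset (Fin 2)) : Prop :=
  ((0 : Fin 2) ∈ A → (0 : Fin 2) ∉ g) ∧ ((1 : Fin 2) ∈ A → (1 : Fin 2) ∉ g) ∧
    ¬((0 : Fin 2) ∈ g ∧ (1 : Fin 2) ∈ g) ∧ ((0 : Fin 1) ∈ T → g = ∅)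

variable {m : ℕ}

def phi (A : Finset (Fin 2)) (f : Fin m → Finset (Fin 2)) (T : Finset (Fin 1)) :
    Finset (Fin 2 ⊕ (Fin m × Fin 2 ⊕ Fin 1)) :=
  A.disjSum ((Finset.univ.filter fun p : Fin m × Fin 2 => p.2 ∈ f p.1).disjSum T)

lemma mem_phi_inl {A f T} {i : Fin 2} : inl i ∈ phi (m := m) A f T ↔ i ∈ A := by
  simp [phi]

lemma mem_phi_mid {A f T} {j : Fin m} {s : Fin 2} :
    inr (inl (j, s)) ∈ phi (m := m) A f T ↔ s ∈ f j := by
  simp [phi]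

lemma mem_phi_inr {A f T} {t : Fin 1} : inr (inr t) ∈ phi (m := m) A f T ↔ t ∈ T := by
  simp [phi]

lemma ind_phi_iff (A : Finset (Fin 2)) (f : Fin m → Finset (Fin 2)) (T : Finset (Fin 1)) :
    (∀ x ∈ phi A f T, ∀ y ∈ phi A f T, ¬ (deltaGraph m 1).Adj x y) ↔
      ∀ j, colCond A T (f j) := by
  constructor
  · intro h j
    refine ⟨?_, ?_, ?_, ?_⟩
    · intro hA hg
      exact h (inl 0) (mem_phi_inl.2 hA) (inr (inl (j, 0))) (mem_phi_mid.2 hg)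
        (by simp [deltaGraph, SimpleGraph.fromRel_adj, deltaRel])
    · intro hA hg
      exact h (inl 1) (mem_phi_inl.2 hA) (inr (inl (j, 1))) (mem_phi_mid.2 hg)
        (by simp [deltaGraph, SimpleGraph.fromRel_adj, deltaRel])
    · rintro ⟨h0, h1⟩
      exact h (inr (inl (j, 0))) (mem_phi_mid.2 h0) (inr (inl (j, 1))) (mem_phi_mid.2 h1)
        (by simp [deltaGraph, SimpleGraph.fromRel_adj, deltaRel])
    · intro hT
      by_contra hne
      obtain ⟨s, hs⟩ := Finset.nonempty_iff_ne_empty.2 hne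
      refine h (inr (inr 0)) (mem_phi_inr.2 hT) (inr (inl (j, s))) (mem_phi_mid.2 hs) ?_
      refine ⟨by simp, Or.inl ?_⟩
      show (s : ℕ) = 0 ∨ (s : ℕ) = 0 + 1
      omega
  · intro h x hx y hy hadj
    obtain ⟨hne, hrel⟩ := hadj
    have key : ∀ u v, u ∈ phi A f T → v ∈ phi A f T → deltaRel m 1 u v → False := by
      rintro (i | (⟨j, s⟩ | t)) (i' | (⟨j', s'⟩ | t')) hu hv hr <;>
        simp only [deltaRel] at hr
      · rw [mem_phi_inl] at hu; rw [mem_phi_mid] at hv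
        rcases hr with ⟨rfl, hs⟩ | ⟨rfl, hs⟩
        · have hs' : s' = 0 := by apply Fin.ext; simpa using hs
          subst hs'
          exact (h j').1 hu hv
        · have hs' : s' = 1 := by apply Fin.ext; simpa using hs
          subst hs'
          exact (h j').2.1 hu hv
      · rw [mem_phi_mid] at hu hv
        obtain ⟨rfl, hs⟩ := hr
        have l1 := s.isLt
        have l2 := s'.isLt
        have hs0 : s = 0 := by apply Fin.ext; simp; omega
        have hs1 : s' = 1 := by apply Fin.ext; simp; omega
        subst hs0; subst hs1
        exact (h j).2.2.1 ⟨hu, hv⟩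
      · rw [mem_phi_inr] at hu; rw [mem_phi_mid] at hv
        have h0 : (0 : Fin 1) ∈ T := by
          have ht : t = 0 := Subsingleton.elim _ _
          rwa [ht] at hu
        have he := (h j').2.2.2 h0
        rw [he] at hv
        exact absurd hv (Finset.notMem_empty _)
    rcases hrel with hr | hr
    · exact key x y hx hy hr
    · exact key y x hy hx hr

lemma card_phi (A : Finset (Fin 2)) (f : Fin m → Finset (Fin 2)) (T : Finset (Fin 1)) :
    (phi A f T).card = A.card + ((∑ j, (f j).card) + T.card) := by
  rw [phi, card_disjSum, card_disjSum]
  congr 2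
  rw [Finset.card_filter, Fintype.sum_prod_type]
  refine Finset.sum_congr rfl fun j _ => ?_
  simp [Finset.sum_ite_mem]

lemma phi_recon (S : Finset (Fin 2 ⊕ (Fin m × Fin 2 ⊕ Fin 1))) :
    phi S.toLeft (fun j => Finset.univ.filter fun s => inr (inl (j, s)) ∈ S)
      S.toRight.toRight = S := by
  ext x
  rcases x with i | (⟨j, s⟩ | t) <;> simp [phi]

instance colCond.decidable (A : Finset (Fin 2)) (T : Finset (Fin 1)) (g : Finset (Fin 2)) :
    Decidable (colCond A T g) := by unfold colCond; infer_instance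

/-- the per-column factor -/
def colSum (A : Finset (Fin 2)) (T : Finset (Fin 1)) : ℤ :=
  ∑ g ∈ Finset.univ.filter (colCond A T), (-1 : ℤ) ^ g.card

lemma colSum_vals :
    colSum ∅ ∅ = -1 ∧ colSum {0} ∅ = 0 ∧ colSum {1} ∅ = 0 ∧ colSum {0, 1} ∅ = 1 ∧
    colSum ∅ {0} = 1 ∧ colSum {0} {0} = 1 ∧ colSum {1} {0} = 1 ∧ colSum {0, 1} {0} = 1 := by
  decide

lemma colInnerSum (A : Finset (Fin 2)) (T : Finset (Fin 1)) :
    ∑ f : Fin m → Finset (Fin 2),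
      (if ∀ j, colCond A T (f j) then ∏ j, (-1 : ℤ) ^ (f j).card else 0) =
      (colSum A T) ^ m := by
  rw [← Finset.sum_filter]
  have hpi : Finset.univ.filter (fun f : Fin m → Finset (Fin 2) => ∀ j, colCond A T (f j)) =
      Fintype.piFinset (fun _ => Finset.univ.filter (colCond A T)) := by
    ext f
    simp [Fintype.mem_piFinset]
  rw [hpi, ← Finset.prod_univ_sum (fun _ : Fin m => Finset.univ.filter (colCond A T))
    (fun _ g => (-1 : ℤ) ^ g.card)]
  rw [show (fun _ : Fin m => ∑ g ∈ Finset.univ.filter (colCond A T), (-1 : ℤ) ^ g.card) =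
    fun _ => colSum A T from rfl]
  rw [Finset.prod_const, Finset.card_univ, Fintype.card_fin]

theorem stmt_13 (m : ℕ) (hm : 2 ≤ m) :
    indepSum (deltaGraph m 1) = 1 + (-1 : ℤ) ^ m := by
  rw [indepSum]
  rw [Finset.sum_nbij'
      (i := fun S : Finset (Fin 2 ⊕ (Fin m × Fin 2 ⊕ Fin 1)) =>
        (S.toLeft, fun j => Finset.univ.filter fun s => inr (inl (j, s)) ∈ S,
          S.toRight.toRight))
      (j := fun q : Finset (Fin 2) × (Fin m → Finset (Fin 2)) × Finset (Fin 1) =>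
        phi q.1 q.2.1 q.2.2)
      (t := Finset.univ.filter
        (fun q : Finset (Fin 2) × (Fin m → Finset (Fin 2)) × Finset (Fin 1) =>
          ∀ j, colCond q.1 q.2.2 (q.2.1 j)))
      (g := fun q => (-1 : ℤ) ^ q.1.card * ((∏ j, (-1 : ℤ) ^ ((q.2.1 j).card)) * (-1 : ℤ) ^ q.2.2.card))
      ?_ ?_ ?_ ?_ ?_]
  · -- remaining computation
    rw [Finset.sum_filter]
    simp only [Fintype.sum_prod_type]
    have step : ∀ (A : Finset (Fin 2)) (T : Finset (Fin 1)),
        (∑ f : Fin m → Finset (Fin 2), if ∀ j, colCond A T (f j) then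
          (-1 : ℤ) ^ A.card * ((∏ j, (-1 : ℤ) ^ ((f j).card)) * (-1 : ℤ) ^ T.card) else 0)
        = (-1 : ℤ) ^ A.card * (-1 : ℤ) ^ T.card * (colSum A T) ^ m := by
      intro A T
      rw [← colInnerSum (m := m) A T, Finset.mul_sum]
      refine Finset.sum_congr rfl fun f _ => ?_
      split <;> ring
    have hsw : ∀ A : Finset (Fin 2),
        (∑ f : Fin m → Finset (Fin 2), ∑ T : Finset (Fin 1),
          if ∀ j, colCond A T (f j) then
            (-1 : ℤ) ^ A.card * ((∏ j, (-1 : ℤ) ^ ((f j).card)) * (-1 : ℤ) ^ T.card) else 0)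
        = ∑ T : Finset (Fin 1), ∑ f : Fin m → Finset (Fin 2),
          if ∀ j, colCond A T (f j) then
            (-1 : ℤ) ^ A.card * ((∏ j, (-1 : ℤ) ^ ((f j).card)) * (-1 : ℤ) ^ T.card) else 0 :=
      fun A => Finset.sum_comm
    simp only [hsw, step]
    rw [show (Finset.univ : Finset (Finset (Fin 2))) = {∅, {0}, {1}, {0, 1}} from by decide]
    rw [Finset.sum_insert (by decide), Finset.sum_insert (by decide),
      Finset.sum_pair (by decide)]
    simp only [show (Finset.univ : Finset (Finset (Fin 1))) = {∅, {0}} from by decide,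
      Finset.sum_pair (show (∅ : Finset (Fin 1)) ≠ {0} from by decide)]
    obtain ⟨h1, h2, h3, h4, h5, h6, h7, h8⟩ := colSum_vals
    rw [h1, h2, h3, h4, h5, h6, h7, h8]
    rw [show ((∅ : Finset (Fin 2)).card) = 0 from rfl,
        show (({0} : Finset (Fin 2)).card) = 1 from by decide,
        show (({1} : Finset (Fin 2)).card) = 1 from by decide,
        show (({0, 1} : Finset (Fin 2)).card) = 2 from by decide,
        show ((∅ : Finset (Fin 1)).card) = 0 from rfl,
        show (({0} : Finset (Fin 1)).card) = 1 from by decide]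
    rw [zero_pow (show m ≠ 0 by omega), one_pow]
    ring
  · intro S hS
    simp only [Finset.mem_filter, Finset.mem_univ, true_and] at hS ⊢
    rw [← ind_phi_iff]
    rw [phi_recon]
    exact hS
  · intro q hq
    simp only [Finset.mem_filter, Finset.mem_univ, true_and] at hq ⊢
    rw [ind_phi_iff]
    exact hq
  · intro S hS
    simp only
    rw [phi_recon]
  · intro q hq
    obtain ⟨A, f, T⟩ := q
    simp only [Prod.mk.injEq]
    refine ⟨by simp [phi], ?_, by simp [phi]⟩
    funext j
    ext s
    simp [phi]
  · intro S hS
    simp only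
    rw [← phi_recon S, card_phi, phi_recon]
    rw [pow_add, pow_add, Finset.prod_pow_eq_pow_sum]
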